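/- arXiv:1703.01733 — 4 statements merged into one kernel-verified Lean document; each statement's English description precedes it below -/
import Mathlib

section
/- For operators S and T on a Hilbert space with 0 ≤ S ≤ I and T ≥ 0, and for every c > 0, the following operator inequality holds: I − (S+T)^{−1/2} S (S+T)^{−1/2} ≤ (1+c)(I−S) + (2+c+c^{−1}) T, where the inverse is taken on the support of S+T. -/
open Matrix Kronecker ComplexOrder

/-- Apply a real function to a Hermitian matrix via its spectral decomposition
(junk value `0` for non-Hermitian input). -/
noncomputable def matFun {n : Type*} [Fintype n] [DecidableEq n]
    (f : ℝ → ℝ) (A : Matrix n n ℂ) : Matrix n n ℂ :=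
  if hA : A.IsHermitian then
    (hA.eigenvectorUnitary : Matrix n n ℂ) *
      Matrix.diagonal (fun i => (f (hA.eigenvalues i) : ℂ)) *
      star (hA.eigenvectorUnitary : Matrix n n ℂ)
  else 0

/-- Matrix logarithm base 2, taken on the support (eigenvalue 0 ↦ 0 since `Real.logb 2 0 = 0`). -/
noncomputable def mlog {n : Type*} [Fintype n] [DecidableEq n] (A : Matrix n n ℂ) :
    Matrix n n ℂ := matFun (Real.logb 2) A

/-- Positive-semidefinite square root of a Hermitian matrix. -/
noncomputable def msqrt {n : Type*} [Fintype n] [DecidableEq n] (A : Matrix n n ℂ) :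
    Matrix n n ℂ := matFun Real.sqrt A

/-- Square root of the Moore–Penrose pseudoinverse (on the support), i.e. `A ↦ A^{-1/2}`. -/
noncomputable def pinvSqrt {n : Type*} [Fintype n] [DecidableEq n] (A : Matrix n n ℂ) :
    Matrix n n ℂ := matFun (fun x => (Real.sqrt x)⁻¹) A

/-- Trace norm `‖A‖₁ = Tr √(AᴴA)`. -/
noncomputable def traceNorm {n : Type*} [Fintype n] [DecidableEq n] (A : Matrix n n ℂ) : ℝ :=
  (msqrt (Aᴴ * A)).trace.re

/-- Quantum relative entropy (base 2), `D(ρ‖σ) = Tr{ρ (log₂ρ − log₂σ)}`. -/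
noncomputable def relEnt {n : Type*} [Fintype n] [DecidableEq n] (ρ σ : Matrix n n ℂ) : ℝ :=
  (ρ * (mlog ρ - mlog σ)).trace.re

/-- Root fidelity `√F(ρ,σ) = ‖√ρ√σ‖₁`. -/
noncomputable def sqrtFid {n : Type*} [Fintype n] [DecidableEq n] (ρ σ : Matrix n n ℂ) : ℝ :=
  traceNorm (msqrt ρ * msqrt σ)

/-- Fidelity `F(ρ,σ) = ‖√ρ√σ‖₁²`. -/
noncomputable def fid {n : Type*} [Fintype n] [DecidableEq n] (ρ σ : Matrix n n ℂ) : ℝ :=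
  (sqrtFid ρ σ) ^ 2

/-- Von Neumann entropy (base 2). -/
noncomputable def vnEntropy {n : Type*} [Fintype n] [DecidableEq n] (ρ : Matrix n n ℂ) : ℝ :=
  -((ρ * mlog ρ).trace.re)

/-- A density operator: positive semi-definite with unit trace. -/
def IsDensity {n : Type*} [Fintype n] [DecidableEq n] (ρ : Matrix n n ℂ) : Prop :=
  ρ.PosSemidef ∧ ρ.trace = 1

/-- Support inclusion `supp ρ ⊆ supp σ`, phrased via kernel containment. -/
def SuppLE {n : Type*} [Fintype n] [DecidableEq n] (ρ σ : Matrix n n ℂ) : Prop :=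
  ∀ v : n → ℂ, σ *ᵥ v = 0 → ρ *ᵥ v = 0

/-- A-marginal (partial trace over B) of a bipartite matrix. -/
noncomputable def margA {a b : Type*} [Fintype a] [Fintype b]
    (ρ : Matrix (a × b) (a × b) ℂ) : Matrix a a ℂ :=
  Matrix.of fun i i' => ∑ j, ρ (i, j) (i', j)

/-- B-marginal (partial trace over A) of a bipartite matrix. -/
noncomputable def margB {a b : Type*} [Fintype a] [Fintype b]
    (ρ : Matrix (a × b) (a × b) ℂ) : Matrix b b ℂ :=
  Matrix.of fun j j' => ∑ i, ρ (i, j) (i, j')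

/-- Max-relative entropy `D_max(ω‖τ) = inf{λ : ω ≤ 2^λ τ}`. -/
noncomputable def Dmax {n : Type*} [Fintype n] [DecidableEq n] (ω τ : Matrix n n ℂ) : ℝ :=
  sInf {l : ℝ | ((2 : ℝ) ^ l • τ - ω).PosSemidef}

/-- Purified distance between (normalized) states, `P(ρ,σ) = √(1 − F(ρ,σ))`. -/
noncomputable def pDist {n : Type*} [Fintype n] [DecidableEq n] (ρ σ : Matrix n n ℂ) : ℝ :=
  Real.sqrt (1 - fid ρ σ)


/-! Put `A = S + T` and `M = A^{-1/2}`, so that `M A = A M = √A` and `M A M ≤ 1`. Since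
`1 - M S M = (1 - M A M) + M T M`, it suffices to bound `M T M`. The operator Young inequality
`(b + d)^* (b + d) ≤ (1 + c) b^* b + (1 + c⁻¹) d^* d`, with `b = √T (M - 1)` and `d = √T`, gives
`M T M ≤ (1 + c) (M - 1) T (M - 1) + (1 + c⁻¹) T`, and `(M - 1) T (M - 1) ≤ (M - 1) A (M - 1)
= M A M - 2 √A + A`. Then `M A M ≤ 1` and `S ≤ √S ≤ √A` close the bound; the last step uses
`S ≤ 1` and the operator monotonicity of the square root. -/

open scoped MatrixOrder Matrix.Norms.L2Operator

section StarOrderedRing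

variable {R : Type*} [Ring R] [StarRing R] [PartialOrder R] [StarOrderedRing R]
  [Module ℝ R] [StarModule ℝ R] [IsScalarTower ℝ R R] [SMulCommClass ℝ R R]

theorem star_add_mul_add_le (b d : R) {c : ℝ} (hc : 0 < c) :
    star (b + d) * (b + d) ≤ (1 + c) • (star b * b) + (1 + c⁻¹) • (star d * d) := by
  set x := √c • b - (√c)⁻¹ • d
  have hx : (1 + c) • (star b * b) + (1 + c⁻¹) • (star d * d) - star (b + d) * (b + d) =
      star x * x := by
    have hsq : √c * √c = c := Real.mul_self_sqrt hc.le
    have hne : √c ≠ 0 := (Real.sqrt_pos.mpr hc).ne'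
    simp only [x, star_sub, star_smul, star_add, star_trivial, sub_mul, mul_sub, add_mul, mul_add,
      smul_mul_smul_comm, hsq, mul_inv_cancel₀ hne, inv_mul_cancel₀ hne, ← mul_inv, one_smul]
    module
  exact sub_nonneg.mp (hx ▸ star_mul_self_nonneg x)

end StarOrderedRing

namespace CFC

variable {A : Type*} [CStarAlgebra A] [PartialOrder A] [StarOrderedRing A]

theorem star_mul_mul_le_star_sub_one_mul_mul {a : A} (ha : 0 ≤ a) (y : A) {c : ℝ} (hc : 0 < c) :
    star y * a * y ≤ (1 + c) • (star (y - 1) * a * (y - 1)) + (1 + c⁻¹) • a := by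
  have hsq : star (sqrt a) * sqrt a = a := by
    rw [(sqrt_nonneg a).isSelfAdjoint.star_eq, sqrt_mul_sqrt_self a ha]
  have hconj : ∀ z, star (sqrt a * z) * (sqrt a * z) = star z * a * z := fun z => by
    rw [star_mul, mul_assoc, ← mul_assoc (star (sqrt a)), hsq, mul_assoc]
  have key := star_add_mul_add_le (sqrt a * (y - 1)) (sqrt a) hc
  rwa [← mul_add_one, sub_add_cancel, hconj, hconj, hsq] at key

theorem le_sqrt_of_le_one {a : A} (ha₀ : 0 ≤ a) (ha₁ : a ≤ 1) : a ≤ sqrt a := by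
  rw [sqrt_eq_real_sqrt a, cfcₙ_eq_cfc, CFC.le_one_iff (R := ℝ) a] at *
  nth_rw 1 [← cfc_id' ℝ a]
  refine cfc_mono (f := fun x => x) (g := Real.sqrt) fun x hx => ?_
  have hx₀ := spectrum_nonneg_of_nonneg ha₀ hx
  rw [Real.le_sqrt hx₀ hx₀]
  nlinarith [ha₁ x hx]

theorem le_sqrt_add {a b : A} (ha₀ : 0 ≤ a) (ha₁ : a ≤ 1) (hb : 0 ≤ b) : a ≤ sqrt (a + b) :=
  (le_sqrt_of_le_one ha₀ ha₁).trans (sqrt_le_sqrt _ _ (le_add_of_nonneg_right hb))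

end CFC

section PinvSqrt

variable {n : Type*} [Fintype n] [DecidableEq n] {A : Matrix n n ℂ}

/-- Since the spectrum is finite, `cfc` applies to discontinuous functions such as `x ↦ (√x)⁻¹`. -/
theorem Matrix.continuousOn_spectrum (A : Matrix n n ℂ) (f : ℝ → ℝ) :
    ContinuousOn f (spectrum ℝ A) :=
  A.finite_real_spectrum.continuousOn f

theorem Matrix.IsHermitian.matFun_eq_cfc (hA : A.IsHermitian) (f : ℝ → ℝ) :
    matFun f A = cfc f A := by
  rw [hA.cfc_eq, Matrix.IsHermitian.cfc, matFun, dif_pos hA]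
  simp [Unitary.conjStarAlgAut_apply, Function.comp_def]

theorem pinvSqrt_eq_cfc (hA : A.IsHermitian) : pinvSqrt A = cfc (fun x => (√x)⁻¹) A :=
  hA.matFun_eq_cfc _

theorem isSelfAdjoint_pinvSqrt (hA : A.IsHermitian) : IsSelfAdjoint (pinvSqrt A) :=
  pinvSqrt_eq_cfc hA ▸ cfc_predicate _ _

theorem pinvSqrt_mul_self (hA : A.PosSemidef) : pinvSqrt A * A = CFC.sqrt A := by
  rw [pinvSqrt_eq_cfc hA.1, CFC.sqrt_eq_real_sqrt A hA.nonneg, cfcₙ_eq_cfc]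
  nth_rw 2 [← cfc_id' ℝ A]
  rw [← cfc_mul _ _ A (A.continuousOn_spectrum _) (A.continuousOn_spectrum _)]
  exact cfc_congr fun x _ => by rw [inv_mul_eq_div, Real.div_sqrt]

theorem self_mul_pinvSqrt (hA : A.PosSemidef) : A * pinvSqrt A = CFC.sqrt A := by
  rw [pinvSqrt_eq_cfc hA.1, CFC.sqrt_eq_real_sqrt A hA.nonneg, cfcₙ_eq_cfc]
  nth_rw 1 [← cfc_id' ℝ A]
  rw [← cfc_mul _ _ A (A.continuousOn_spectrum _) (A.continuousOn_spectrum _)]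
  exact cfc_congr fun x _ => by rw [← div_eq_mul_inv, Real.div_sqrt]

theorem pinvSqrt_mul_self_mul_pinvSqrt_le_one (hA : A.PosSemidef) :
    pinvSqrt A * A * pinvSqrt A ≤ 1 := by
  rw [pinvSqrt_mul_self hA, CFC.sqrt_eq_real_sqrt A hA.nonneg, cfcₙ_eq_cfc, pinvSqrt_eq_cfc hA.1,
    ← cfc_mul _ _ A (A.continuousOn_spectrum _) (A.continuousOn_spectrum _)]
  exact cfc_le_one _ _ fun x _ => mul_inv_le_one

end PinvSqrt

/-- Hayashi–Nagaoka operator inequality. -/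
theorem hayashi_nagaoka {n : Type*} [Fintype n] [DecidableEq n]
    (S T : Matrix n n ℂ) (hS : S.PosSemidef) (hS1 : ((1 : Matrix n n ℂ) - S).PosSemidef)
    (hT : T.PosSemidef) (c : ℝ) (hc : 0 < c) :
    ((1 + c) • ((1 : Matrix n n ℂ) - S) + (2 + c + c⁻¹) • T -
      ((1 : Matrix n n ℂ) - pinvSqrt (S + T) * S * pinvSqrt (S + T))).PosSemidef := by
  have hA : (S + T).PosSemidef := hS.add hT
  set A := S + T with hA_def
  set M := pinvSqrt A
  set N := CFC.sqrt A
  have hM : star M = M := (isSelfAdjoint_pinvSqrt hA.1).star_eq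
  have hconj : star (M - 1) * A * (M - 1) = M * A * M - 2 • N + A := by
    have hexpand : star (M - 1) * A * (M - 1) = M * A * M - M * A - A * M + A := by
      rw [star_sub, star_one, hM]; noncomm_ring
    rw [hexpand, pinvSqrt_mul_self hA, self_mul_pinvSqrt hA]
    abel
  refine Matrix.le_iff.mp ?_
  calc 1 - M * S * M = (1 - M * A * M) + star M * T * M := by rw [hM, hA_def]; noncomm_ring
    _ ≤ (1 - M * A * M) + ((1 + c) • (star (M - 1) * T * (M - 1)) + (1 + c⁻¹) • T) := by
      gcongr
      exact CFC.star_mul_mul_le_star_sub_one_mul_mul hT.nonneg M hc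
    _ ≤ (1 - M * A * M) + ((1 + c) • (star (M - 1) * A * (M - 1)) + (1 + c⁻¹) • T) := by
      gcongr
      exact star_left_conjugate_le_conjugate (le_add_of_nonneg_left hS.nonneg) _
    _ = 1 + c • (M * A * M) + (1 + c) • (A - 2 • N) + (1 + c⁻¹) • T := by
      rw [hconj]; module
    _ ≤ 1 + c • 1 + (1 + c) • (A - 2 • S) + (1 + c⁻¹) • T := by
      gcongr
      · exact pinvSqrt_mul_self_mul_pinvSqrt_le_one hA
      · exact CFC.le_sqrt_add hS.nonneg hS1 hT.nonneg
    _ = (1 + c) • (1 - S) + (2 + c + c⁻¹) • T := by rw [hA_def]; module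
end

section
/- For density operators ρ and τ with supp(ρ) ⊆ supp(τ), the quantum relative entropy is bounded below by the negative logarithm of the fidelity: D(ρ‖τ) ≥ −log₂ F(ρ,τ), where F(ρ,τ) = ‖√ρ √τ‖₁². -/
open Matrix Kronecker ComplexOrder

/-! Diagonalize `ρ = ∑ pᵢ |aᵢ⟩⟨aᵢ|` and `τ = ∑ qⱼ |bⱼ⟩⟨bⱼ|`. The overlaps `cᵢⱼ = |⟨aᵢ|bⱼ⟩|²` are
stochastic, so both quantities become classical: `D(ρ‖τ) = ∑ pᵢcᵢⱼ (log pᵢ − log qⱼ)` and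
`Tr √ρ√τ = ∑ pᵢcᵢⱼ √(qⱼ/pᵢ)`. Jensen's inequality for `log` under the probability weights `pᵢcᵢⱼ`
gives `−D/2 ≤ log Tr √ρ√τ`; the support condition makes `qⱼ > 0` wherever `pᵢcᵢⱼ > 0`. Finally
`Re Tr X ≤ ‖X‖₁`. -/

open scoped InnerProductSpace

namespace Matrix.IsHermitian

variable {n : Type*} [Fintype n] [DecidableEq n] {A B : Matrix n n ℂ}

lemma matFun_eq (hA : A.IsHermitian) (f : ℝ → ℝ) :
    matFun f A = (hA.eigenvectorUnitary : Matrix n n ℂ) *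
      diagonal (fun i => (f (hA.eigenvalues i) : ℂ)) *
      star (hA.eigenvectorUnitary : Matrix n n ℂ) :=
  dif_pos hA

lemma matFun_id (hA : A.IsHermitian) : matFun (fun x => x) A = A := by
  rw [hA.matFun_eq]
  exact hA.spectral_theorem.symm

lemma trace_matFun (hA : A.IsHermitian) (f : ℝ → ℝ) :
    (matFun f A).trace = ∑ i, (f (hA.eigenvalues i) : ℂ) := by
  rw [hA.matFun_eq, trace_mul_cycle, Unitary.coe_star_mul_self, one_mul, trace_diagonal]

noncomputable def eigenOverlap (hA : A.IsHermitian) (hB : B.IsHermitian) (i j : n) : ℝ :=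
  ‖⟪hA.eigenvectorBasis i, hB.eigenvectorBasis j⟫_ℂ‖ ^ 2

lemma sum_eigenOverlap (hA : A.IsHermitian) (hB : B.IsHermitian) (i : n) :
    ∑ j, hA.eigenOverlap hB i j = 1 := by
  simp only [eigenOverlap]
  rw [hB.eigenvectorBasis.sum_sq_norm_inner_left, hA.eigenvectorBasis.orthonormal.1 i, one_pow]

lemma eigenOverlap_self (hA : A.IsHermitian) (i j : n) :
    hA.eigenOverlap hA i j = if i = j then 1 else 0 := by
  rw [eigenOverlap, orthonormal_iff_ite.mp hA.eigenvectorBasis.orthonormal]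
  split_ifs <;> simp

lemma sum_sum_mul_eigenOverlap (hA : A.IsHermitian) (hB : B.IsHermitian) (x : n → ℝ) :
    ∑ i, ∑ j, x i * hA.eigenOverlap hB i j = ∑ i, x i := by
  simp_rw [← Finset.mul_sum, sum_eigenOverlap, mul_one]

lemma star_eigenvectorUnitary_mul_eigenvectorUnitary_apply (hA : A.IsHermitian)
    (hB : B.IsHermitian) (i j : n) :
    (star (hA.eigenvectorUnitary : Matrix n n ℂ) * hB.eigenvectorUnitary) i j =
      ⟪hA.eigenvectorBasis i, hB.eigenvectorBasis j⟫_ℂ := by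
  simp [mul_apply, EuclideanSpace.inner_eq_star_dotProduct, dotProduct, mul_comm]

lemma trace_matFun_mul_matFun (hA : A.IsHermitian) (hB : B.IsHermitian) (f g : ℝ → ℝ) :
    (matFun f A * matFun g B).trace =
      ((∑ i, ∑ j, f (hA.eigenvalues i) * g (hB.eigenvalues j) * hA.eigenOverlap hB i j : ℝ) :
        ℂ) := by
  set U := (hA.eigenvectorUnitary : Matrix n n ℂ)
  set V := (hB.eigenvectorUnitary : Matrix n n ℂ)
  set W := star U * V with hW
  have hUU : U * star U = 1 := Unitary.coe_mul_star_self _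
  have hconj : matFun f A * matFun g B = U * (diagonal (fun i => (f (hA.eigenvalues i) : ℂ)) * W *
      diagonal (fun j => (g (hB.eigenvalues j) : ℂ)) * star W) * star U := by
    rw [hA.matFun_eq, hB.matFun_eq, hW, star_mul, star_star]
    simp only [Matrix.mul_assoc]
    rw [hUU, Matrix.mul_one]
  rw [hconj, trace_mul_cycle, Unitary.coe_star_mul_self, Matrix.one_mul, trace]
  push_cast
  refine Finset.sum_congr rfl fun i _ => ?_
  rw [diag_apply, mul_apply]
  refine Finset.sum_congr rfl fun j _ => ?_
  rw [mul_diagonal, diagonal_mul, star_apply, eigenOverlap,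
    ← hA.star_eigenvectorUnitary_mul_eigenvectorUnitary_apply hB, Complex.ofReal_pow,
    ← Complex.mul_conj', Complex.star_def]
  ring

lemma trace_mul_matFun (hA : A.IsHermitian) (hB : B.IsHermitian) (g : ℝ → ℝ) :
    (A * matFun g B).trace =
      ((∑ i, ∑ j, hA.eigenvalues i * g (hB.eigenvalues j) * hA.eigenOverlap hB i j : ℝ) : ℂ) := by
  simpa only [hA.matFun_id] using hA.trace_matFun_mul_matFun hB (fun x => x) g

lemma trace_mul_matFun_self (hA : A.IsHermitian) (g : ℝ → ℝ) :
    (A * matFun g A).trace = ((∑ i, hA.eigenvalues i * g (hA.eigenvalues i) : ℝ) : ℂ) := by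
  simp [hA.trace_mul_matFun hA, eigenOverlap_self]

lemma relEnt_eq_sum (hA : A.IsHermitian) (hB : B.IsHermitian) :
    relEnt A B = ∑ i, ∑ j, hA.eigenvalues i * hA.eigenOverlap hB i j *
      (Real.logb 2 (hA.eigenvalues i) - Real.logb 2 (hB.eigenvalues j)) := by
  rw [relEnt, Matrix.mul_sub, trace_sub, Complex.sub_re, mlog, mlog, hA.trace_mul_matFun_self,
    hA.trace_mul_matFun hB, Complex.ofReal_re, Complex.ofReal_re,
    ← hA.sum_sum_mul_eigenOverlap hB]
  simp_rw [mul_sub, Finset.sum_sub_distrib]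
  congr 1 <;> exact Finset.sum_congr rfl fun i _ => Finset.sum_congr rfl fun j _ => by ring

lemma toEuclideanLin_eigenvectorBasis (hA : A.IsHermitian) (i : n) :
    toEuclideanLin A (hA.eigenvectorBasis i) = (hA.eigenvalues i : ℂ) • hA.eigenvectorBasis i := by
  ext1
  rw [ofLp_toLpLin, toLin'_apply, hA.mulVec_eigenvectorBasis, WithLp.ofLp_smul,
    Complex.coe_smul]

lemma eigenvalue_mul_eigenOverlap_eq_zero (hA : A.IsHermitian) (hB : B.IsHermitian)
    (hAB : SuppLE A B) {j : n} (hj : hB.eigenvalues j = 0) (i : n) :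
    hA.eigenvalues i * hA.eigenOverlap hB i j = 0 := by
  have hAv : toEuclideanLin A (hB.eigenvectorBasis j) = 0 := by
    ext1
    rw [ofLp_toLpLin, toLin'_apply, hAB _ (by rw [hB.mulVec_eigenvectorBasis, hj, zero_smul])]
    rfl
  have h : (hA.eigenvalues i : ℂ) * ⟪hA.eigenvectorBasis i, hB.eigenvectorBasis j⟫_ℂ = 0 := by
    rw [← Complex.conj_ofReal, ← inner_smul_left, ← hA.toEuclideanLin_eigenvectorBasis,
      isSymmetric_toEuclideanLin_iff.mpr hA, hAv, inner_zero_right]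
  rcases mul_eq_zero.mp h with ha | hv
  · rw [Complex.ofReal_eq_zero.mp ha, zero_mul]
  · rw [eigenOverlap, hv, norm_zero, zero_pow two_ne_zero, mul_zero]

end Matrix.IsHermitian

lemma Matrix.PosSemidef.re_trace_msqrt_mul_msqrt {n : Type*} [Fintype n] [DecidableEq n]
    {A B : Matrix n n ℂ} (hA : A.PosSemidef) (hB : B.IsHermitian) :
    (msqrt A * msqrt B).trace.re = ∑ i, ∑ j, hA.1.eigenvalues i * hA.1.eigenOverlap hB i j *
      (Real.sqrt (hB.eigenvalues j) / Real.sqrt (hA.1.eigenvalues i)) := by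
  rw [msqrt, msqrt, hA.1.trace_matFun_mul_matFun hB, Complex.ofReal_re]
  refine Finset.sum_congr rfl fun i _ => Finset.sum_congr rfl fun j _ => ?_
  rcases eq_or_ne (Real.sqrt (hA.1.eigenvalues i)) 0 with ha | ha
  · rw [ha, div_zero, mul_zero, zero_mul, zero_mul]
  · field_simp
    linear_combination (Real.sqrt (hB.eigenvalues j) * hA.1.eigenOverlap hB i j) *
      Real.mul_self_sqrt (hA.eigenvalues_nonneg i)

section TraceNorm

variable {𝕜 : Type*} [RCLike 𝕜] {n ι : Type*} [Fintype n] [DecidableEq n] [Fintype ι]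

lemma Matrix.trace_eq_sum_inner_toEuclideanLin (X : Matrix n n 𝕜)
    (b : OrthonormalBasis ι 𝕜 (EuclideanSpace 𝕜 n)) :
    X.trace = ∑ i, ⟪b i, toEuclideanLin X (b i)⟫_𝕜 := by
  rw [← LinearMap.trace_eq_sum_inner, LinearMap.trace_eq_matrix_trace 𝕜 (PiLp.basisFun 2 𝕜 n),
    toEuclideanLin, toLpLin_eq_toLin, LinearMap.toMatrix_toLin]

lemma Matrix.norm_toEuclideanLin_eigenvectorBasis_sq (X : Matrix n n 𝕜)
    (hH : (Xᴴ * X).IsHermitian) (j : n) :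
    ‖toEuclideanLin X (hH.eigenvectorBasis j)‖ ^ 2 = hH.eigenvalues j := by
  rw [hH.eigenvalues_eq, ← mulVec_mulVec, dotProduct_mulVec, ← star_mulVec, dotProduct_comm,
    ← EuclideanSpace.inner_toLp_toLp, ← toLpLin_apply, inner_self_eq_norm_sq]

end TraceNorm

lemma re_trace_le_traceNorm {n : Type*} [Fintype n] [DecidableEq n] (X : Matrix n n ℂ) :
    X.trace.re ≤ traceNorm X := by
  have hH := isHermitian_conjTranspose_mul_self X
  rw [X.trace_eq_sum_inner_toEuclideanLin hH.eigenvectorBasis, traceNorm, msqrt, hH.trace_matFun,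
    Complex.re_sum, Complex.re_sum]
  refine Finset.sum_le_sum fun i _ => ?_
  calc (⟪hH.eigenvectorBasis i, toEuclideanLin X (hH.eigenvectorBasis i)⟫_ℂ).re
      ≤ ‖hH.eigenvectorBasis i‖ * ‖toEuclideanLin X (hH.eigenvectorBasis i)‖ :=
        (Complex.re_le_norm _).trans (norm_inner_le_norm _ _)
    _ = Real.sqrt (hH.eigenvalues i) := by
        rw [hH.eigenvectorBasis.norm_eq_one, one_mul,
          ← X.norm_toEuclideanLin_eigenvectorBasis_sq hH, Real.sqrt_sq (norm_nonneg _)]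
    _ = (Real.sqrt (hH.eigenvalues i) : ℂ).re := (Complex.ofReal_re _).symm

lemma Real.sum_mul_logb_le_logb_sum_mul {ι : Type*} [Fintype ι] {b : ℝ} (hb : 1 < b)
    (w z : ι → ℝ) (hw : ∀ i, 0 ≤ w i) (hw1 : ∑ i, w i = 1) (hz : ∀ i, w i ≠ 0 → 0 < z i) :
    0 < ∑ i, w i * z i ∧ ∑ i, w i * Real.logb b (z i) ≤ Real.logb b (∑ i, w i * z i) := by
  classical
  set s := Finset.univ.filter (fun i => w i ≠ 0)
  have hs : ∀ f : ι → ℝ, ∑ i ∈ s, w i * f i = ∑ i, w i * f i := fun f =>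
    Finset.sum_filter_of_ne fun i _ h => left_ne_zero_of_mul h
  have hws : ∑ i ∈ s, w i = 1 := by rw [Finset.sum_filter_ne_zero, hw1]
  have hzs : ∀ i ∈ s, 0 < z i := fun i hi => hz i (Finset.mem_filter.mp hi).2
  constructor
  · obtain ⟨i, hi⟩ : s.Nonempty := Finset.nonempty_of_sum_ne_zero (by rw [hws]; exact one_ne_zero)
    rw [← hs]
    exact Finset.sum_pos
      (fun i hi => mul_pos ((hw i).lt_of_ne' (Finset.mem_filter.mp hi).2) (hzs i hi)) ⟨i, hi⟩
  · have hlog : ∑ i, w i * Real.log (z i) ≤ Real.log (∑ i, w i * z i) := by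
      rw [← hs, ← hs]
      exact strictConcaveOn_log_Ioi.concaveOn.le_map_sum (fun i _ => hw i) hws hzs
    simp_rw [Real.logb, ← mul_div_assoc, ← Finset.sum_div]
    exact div_le_div_of_nonneg_right hlog (Real.log_nonneg hb.le)

lemma neg_relEnt_div_two_le_logb_re_trace_msqrt_mul_msqrt {n : Type*} [Fintype n]
    [DecidableEq n] {ρ τ : Matrix n n ℂ} (hρ : IsDensity ρ) (hτ : τ.PosSemidef)
    (hs : SuppLE ρ τ) :
    0 < (msqrt ρ * msqrt τ).trace.re ∧
      -relEnt ρ τ / 2 ≤ Real.logb 2 (msqrt ρ * msqrt τ).trace.re := by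
  obtain ⟨hρP, hρtr⟩ := hρ
  set p := hρP.1.eigenvalues
  set q := hτ.1.eigenvalues
  set c := hρP.1.eigenOverlap hτ.1
  set w : n × n → ℝ := fun x => p x.1 * c x.1 x.2 with hw_def
  set z : n × n → ℝ := fun x => Real.sqrt (q x.2) / Real.sqrt (p x.1) with hz_def
  have hw : ∀ x, 0 ≤ w x := fun x => mul_nonneg (hρP.eigenvalues_nonneg _) (sq_nonneg _)
  have hw1 : ∑ x, w x = 1 := by
    rw [Fintype.sum_prod_type, hρP.1.sum_sum_mul_eigenOverlap hτ.1]
    have htr : ((∑ i, p i : ℝ) : ℂ) = 1 := by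
      rw [Complex.ofReal_sum, ← hρtr]
      exact hρP.1.trace_eq_sum_eigenvalues.symm
    exact_mod_cast htr
  have hpq : ∀ x, w x ≠ 0 → 0 < p x.1 ∧ 0 < q x.2 := fun x hx =>
    ⟨(hρP.eigenvalues_nonneg _).lt_of_ne' (left_ne_zero_of_mul hx),
      (hτ.eigenvalues_nonneg _).lt_of_ne' fun hq =>
        hx (hρP.1.eigenvalue_mul_eigenOverlap_eq_zero hτ.1 hs hq _)⟩
  have hz : ∀ x, w x ≠ 0 → 0 < z x := fun x hx =>
    div_pos (Real.sqrt_pos.mpr (hpq x hx).2) (Real.sqrt_pos.mpr (hpq x hx).1)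
  have hS : (msqrt ρ * msqrt τ).trace.re = ∑ x, w x * z x := by
    rw [hρP.re_trace_msqrt_mul_msqrt hτ.1, Fintype.sum_prod_type]
  have hD : -relEnt ρ τ / 2 = ∑ x, w x * Real.logb 2 (z x) := by
    rw [hρP.1.relEnt_eq_sum hτ.1, Fintype.sum_prod_type, neg_div, Finset.sum_div,
      ← Finset.sum_neg_distrib]
    refine Finset.sum_congr rfl fun i _ => ?_
    rw [Finset.sum_div, ← Finset.sum_neg_distrib]
    refine Finset.sum_congr rfl fun j _ => ?_
    by_cases hx : w (i, j) = 0
    · rw [hx, zero_mul, show p i * c i j = 0 from hx, zero_mul, zero_div, neg_zero]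
    obtain ⟨hp, hq⟩ := hpq _ hx
    simp only [hw_def, hz_def, Real.logb, Real.log_div (Real.sqrt_pos.mpr hq).ne'
      (Real.sqrt_pos.mpr hp).ne', Real.log_sqrt hp.le, Real.log_sqrt hq.le]
    ring
  rw [hS, hD]
  exact Real.sum_mul_logb_le_logb_sum_mul one_lt_two w z hw hw1 hz

/-- Relative entropy is bounded below by the negative log-fidelity. -/
theorem relEnt_ge_neg_log_fid {n : Type*} [Fintype n] [DecidableEq n]
    (ρ τ : Matrix n n ℂ) (hρ : IsDensity ρ) (hτ : IsDensity τ)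
    (hsupp : SuppLE ρ τ) :
    relEnt ρ τ ≥ -Real.logb 2 (fid ρ τ) := by
  obtain ⟨htr_pos, hbound⟩ := neg_relEnt_div_two_le_logb_re_trace_msqrt_mul_msqrt hρ hτ.1 hsupp
  have htr_le : (msqrt ρ * msqrt τ).trace.re ≤ sqrtFid ρ τ := re_trace_le_traceNorm _
  have hlog_fid : Real.logb 2 (fid ρ τ) = 2 * Real.logb 2 (sqrtFid ρ τ) := by
    rw [fid, Real.logb_pow, Nat.cast_ofNat]
  have hlog_le := Real.logb_le_logb_of_le one_lt_two htr_pos htr_le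
  linarith
end

section
/- Let ρ_{XB} = Σ_x p(x)|x⟩⟨x|_X ⊗ |ψ^x⟩⟨ψ^x|_B be a classical–quantum state with pure conditional states, and define the relative entropy variance V(X;B) = Tr{ρ_{XB}[log₂ρ_{XB} − log₂(ρ_X⊗ρ_B) − I(X;B)]²}. Then V(X;B) equals the entropy variance of the average state: V(X;B) = Tr{ρ_B[−log₂ρ_B − H(ρ_B)]²}, where ρ_B = Σ_x p(x)|ψ^x⟩⟨ψ^x| and H(ρ_B) = −Tr{ρ_B log₂ρ_B}. -/
open Matrix Kronecker ComplexOrder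

/-!
The vectors `|x⟩ ⊗ ψ x` are orthonormal eigenvectors of `ρXB` with eigenvalues `p x`, so `log ρXB`
acts on them as the scalar `log p x`. Each `ψ x` lies in the support of `ρB`, where
`log (ρX ⊗ ρB) = log ρX ⊗ 1 + 1 ⊗ log ρB`; hence `log ρXB - log (ρX ⊗ ρB)` sends `|x⟩ ⊗ ψ x` to
`|x⟩ ⊗ (-log ρB) ψ x`. A trace against `ρXB` of this operator, or of its square, is therefore the
`p`-average of the corresponding expectation values in the states `ψ x`, that is, a trace against
`ρB`: this gives first `D(ρXB ‖ ρX ⊗ ρB) = H(ρB)` and then the equality of the variances.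
-/

section KroneckerVec

variable {R a b : Type*}

def kroneckerVec [Mul R] (u : a → R) (v : b → R) : a × b → R := fun q => u q.1 * v q.2

variable [CommSemiring R]

theorem kroneckerVec_sum {ι : Type*} (u : a → R) (s : Finset ι) (v : ι → b → R) :
    kroneckerVec u (∑ i ∈ s, v i) = ∑ i ∈ s, kroneckerVec u (v i) := by
  ext q
  simp [kroneckerVec, Finset.sum_apply, Finset.mul_sum]

theorem kroneckerVec_smul {S : Type*} [SMul S R] [SMulCommClass S R R] (u : a → R) (c : S)
    (v : b → R) : kroneckerVec u (c • v) = c • kroneckerVec u v := by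
  ext q
  simp [kroneckerVec, mul_smul_comm]

theorem kroneckerVec_sub {R : Type*} [CommRing R] (u : a → R) (v w : b → R) :
    kroneckerVec u (v - w) = kroneckerVec u v - kroneckerVec u w := by
  ext q
  simp [kroneckerVec, mul_sub]

theorem star_kroneckerVec [StarRing R] (u : a → R) (v : b → R) :
    star (kroneckerVec u v) = kroneckerVec (star u) (star v) := by
  ext q
  simp [kroneckerVec, star_mul']

theorem kroneckerVec_dotProduct [Fintype a] [Fintype b] (u u' : a → R) (v v' : b → R) :
    kroneckerVec u v ⬝ᵥ kroneckerVec u' v' = (u ⬝ᵥ u') * (v ⬝ᵥ v') := by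
  simp only [dotProduct, kroneckerVec, Fintype.sum_prod_type, Finset.sum_mul_sum]
  exact Finset.sum_congr rfl fun _ _ => Finset.sum_congr rfl fun _ _ => by ring

theorem kroneckerMap_mulVec_kroneckerVec {l m : Type*} [Fintype a] [Fintype b]
    (A : Matrix l a R) (B : Matrix m b R) (u : a → R) (v : b → R) :
    (A ⊗ₖ B) *ᵥ kroneckerVec u v = kroneckerVec (A *ᵥ u) (B *ᵥ v) := by
  ext ⟨i, j⟩
  exact kroneckerVec_dotProduct (A i) u (B j) v

theorem vecMulVec_kroneckerVec {a' b' : Type*} (u : a → R) (u' : a' → R) (v : b → R)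
    (v' : b' → R) :
    vecMulVec (kroneckerVec u v) (kroneckerVec u' v') = vecMulVec u u' ⊗ₖ vecMulVec v v' := by
  ext ⟨i, j⟩ ⟨i', j'⟩
  simp only [vecMulVec_apply, kroneckerVec, kroneckerMap_apply]
  ring

end KroneckerVec

section SpectralCalculus

variable {n : Type*} [Fintype n] [DecidableEq n] {A : Matrix n n ℂ}

theorem Matrix.IsHermitian.sum_dotProduct_smul_eigenvectorBasis (hA : A.IsHermitian)
    (v : n → ℂ) :
    ∑ j, (star ⇑(hA.eigenvectorBasis j) ⬝ᵥ v) • ⇑(hA.eigenvectorBasis j) = v := by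
  have := congrArg WithLp.ofLp (hA.eigenvectorBasis.sum_repr' (WithLp.toLp 2 v))
  simpa [EuclideanSpace.inner_eq_star_dotProduct, dotProduct_comm] using this

theorem Matrix.IsHermitian.star_eigenvectorBasis_dotProduct_mulVec (hA : A.IsHermitian) (j : n)
    (v : n → ℂ) :
    star ⇑(hA.eigenvectorBasis j) ⬝ᵥ (A *ᵥ v)
      = hA.eigenvalues j • (star ⇑(hA.eigenvectorBasis j) ⬝ᵥ v) := by
  have h : star ⇑(hA.eigenvectorBasis j) ᵥ* A = star (A *ᵥ ⇑(hA.eigenvectorBasis j)) := by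
    rw [star_mulVec, hA.eq]
  rw [dotProduct_mulVec, h, hA.mulVec_eigenvectorBasis, star_smul, star_trivial, smul_dotProduct]

theorem Matrix.IsHermitian.star_dotProduct_sq_mulVec (hA : A.IsHermitian) (v : n → ℂ) :
    star v ⬝ᵥ (A ^ 2 *ᵥ v) = star (A *ᵥ v) ⬝ᵥ (A *ᵥ v) := by
  rw [pow_two, ← mulVec_mulVec, dotProduct_mulVec, star_mulVec, hA.eq]

theorem matFun_isHermitian (f : ℝ → ℝ) (A : Matrix n n ℂ) : (matFun f A).IsHermitian := by
  unfold matFun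
  split_ifs with hA
  · exact isHermitian_mul_mul_conjTranspose _
      (isHermitian_diagonal_of_self_adjoint _ (by ext; simp))
  · exact isHermitian_zero

theorem matFun_mulVec_eigenvectorBasis (f : ℝ → ℝ) (hA : A.IsHermitian) (j : n) :
    matFun f A *ᵥ ⇑(hA.eigenvectorBasis j)
      = f (hA.eigenvalues j) • ⇑(hA.eigenvectorBasis j) := by
  rw [matFun, dif_pos hA, ← mulVec_mulVec, ← mulVec_mulVec, hA.star_eigenvectorUnitary_mulVec,
    diagonal_mulVec_single, mul_one]
  ext i
  simp [mulVec_single, Complex.real_smul, mul_comm]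

theorem matFun_mulVec (f : ℝ → ℝ) (hA : A.IsHermitian) (v : n → ℂ) :
    matFun f A *ᵥ v = ∑ j, (star ⇑(hA.eigenvectorBasis j) ⬝ᵥ v) •
      f (hA.eigenvalues j) • ⇑(hA.eigenvectorBasis j) := by
  conv_lhs => rw [← hA.sum_dotProduct_smul_eigenvectorBasis v]
  simp only [mulVec_sum, mulVec_smul, matFun_mulVec_eigenvectorBasis f hA]

theorem matFun_mulVec_of_mulVec_eq_smul (f : ℝ → ℝ) (hA : A.IsHermitian) {v : n → ℂ} {t : ℝ}
    (hv : A *ᵥ v = t • v) : matFun f A *ᵥ v = f t • v := by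
  conv_rhs => rw [← hA.sum_dotProduct_smul_eigenvectorBasis v]
  rw [matFun_mulVec f hA, Finset.smul_sum]
  refine Finset.sum_congr rfl fun j _ => ?_
  set c := star ⇑(hA.eigenvectorBasis j) ⬝ᵥ v
  have hc : hA.eigenvalues j • c = t • c := by
    rw [← hA.star_eigenvectorBasis_dotProduct_mulVec, hv, dotProduct_smul]
  rcases eq_or_ne c 0 with h | h
  · simp [h]
  · have ht : hA.eigenvalues j = t := by
      simpa [Complex.real_smul, h] using hc
    rw [ht, smul_comm]

end SpectralCalculus

theorem Matrix.IsHermitian.kronecker {R a b : Type*} [CommRing R] [StarRing R]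
    {A : Matrix a a R} {B : Matrix b b R}
    (hA : A.IsHermitian) (hB : B.IsHermitian) : (A ⊗ₖ B).IsHermitian := by
  rw [IsHermitian, conjTranspose_kronecker, hA.eq, hB.eq]

/-- `hφ` puts `φ` in the support of `B`; off it, the junk value `logb 2 0 = 0` breaks the
additivity of the logarithm. -/
theorem mlog_kronecker_mulVec_kroneckerVec {a b : Type*} [Fintype a] [DecidableEq a]
    [Fintype b] [DecidableEq b] {A : Matrix a a ℂ} {B : Matrix b b ℂ}
    (hA : A.IsHermitian) (hB : B.IsHermitian) {e : a → ℂ} {s : ℝ} (he : A *ᵥ e = s • e)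
    (hs : s ≠ 0) {φ : b → ℂ} (hφ : ∀ w, B *ᵥ w = 0 → star w ⬝ᵥ φ = 0) :
    mlog (A ⊗ₖ B) *ᵥ kroneckerVec e φ
      = Real.logb 2 s • kroneckerVec e φ + kroneckerVec e (mlog B *ᵥ φ) := by
  set u := fun j => ⇑(hB.eigenvectorBasis j)
  set c := fun j => star (u j) ⬝ᵥ φ
  have hφ_sum : ∑ j, c j • kroneckerVec e (u j) = kroneckerVec e φ := by
    simp only [c, u, ← kroneckerVec_smul, ← kroneckerVec_sum,
      hB.sum_dotProduct_smul_eigenvectorBasis]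
  have hterm : ∀ j, c j • (mlog (A ⊗ₖ B) *ᵥ kroneckerVec e (u j))
      = c j • (Real.logb 2 s • kroneckerVec e (u j)
          + Real.logb 2 (hB.eigenvalues j) • kroneckerVec e (u j)) := by
    intro j
    by_cases hμ : hB.eigenvalues j = 0
    · have : c j = 0 := hφ _ (by simp [u, hB.mulVec_eigenvectorBasis, hμ])
      simp [this]
    · have heig : (A ⊗ₖ B) *ᵥ kroneckerVec e (u j)
          = (s * hB.eigenvalues j) • kroneckerVec e (u j) := by
        rw [kroneckerMap_mulVec_kroneckerVec, he, hB.mulVec_eigenvectorBasis]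
        ext q
        simp only [kroneckerVec, Pi.smul_apply, Complex.real_smul, u]
        push_cast
        ring
      rw [mlog, matFun_mulVec_of_mulVec_eq_smul _ (hA.kronecker hB) heig, Real.logb_mul hs hμ,
        add_smul]
  calc mlog (A ⊗ₖ B) *ᵥ kroneckerVec e φ
      = ∑ j, c j • (mlog (A ⊗ₖ B) *ᵥ kroneckerVec e (u j)) := by
        rw [← hφ_sum, mulVec_sum]
        simp only [mulVec_smul]
    _ = ∑ j, c j • (Real.logb 2 s • kroneckerVec e (u j)
          + Real.logb 2 (hB.eigenvalues j) • kroneckerVec e (u j)) :=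
        Finset.sum_congr rfl fun j _ => hterm j
    _ = Real.logb 2 s • kroneckerVec e φ + kroneckerVec e (mlog B *ᵥ φ) := by
      rw [mlog, matFun_mulVec _ hB, kroneckerVec_sum]
      simp only [smul_add, Finset.sum_add_distrib, smul_comm (c _) (Real.logb 2 s),
        ← Finset.smul_sum, hφ_sum, kroneckerVec_smul]
      rfl

section Ensemble

variable {ι n : Type*} [Fintype ι] [Fintype n]

noncomputable def ensemble (p : ι → ℝ) (φ : ι → n → ℂ) : Matrix n n ℂ :=
  ∑ i, p i • vecMulVec (φ i) (star (φ i))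

theorem ensemble_isHermitian (p : ι → ℝ) (φ : ι → n → ℂ) : (ensemble p φ).IsHermitian := by
  refine isHermitian_iff_isSelfAdjoint.mpr (isSelfAdjoint_sum _ fun i _ => ?_)
  exact .smul (.all _)
    (isHermitian_iff_isSelfAdjoint.mp (posSemidef_vecMulVec_self_star _).isHermitian)

theorem trace_ensemble_mul (p : ι → ℝ) (φ : ι → n → ℂ) (M : Matrix n n ℂ) :
    (ensemble p φ * M).trace = ∑ i, p i • (star (φ i) ⬝ᵥ (M *ᵥ φ i)) := by
  simp only [ensemble, Finset.sum_mul, trace_sum, smul_mul_assoc, trace_smul, vecMulVec_mul,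
    trace_vecMulVec, dotProduct_comm (φ _), dotProduct_mulVec]

theorem ensemble_mulVec_of_orthonormal [DecidableEq ι] (p : ι → ℝ) {φ : ι → n → ℂ}
    (hφ : ∀ i j, star (φ i) ⬝ᵥ φ j = if i = j then 1 else 0) (i : ι) :
    ensemble p φ *ᵥ φ i = p i • φ i := by
  simp [ensemble, sum_mulVec, smul_mulVec, vecMulVec_mulVec, hφ]

theorem star_dotProduct_eq_zero_of_ensemble_mulVec_eq_zero {p : ι → ℝ} (hp : ∀ i, 0 < p i)
    {φ : ι → n → ℂ} {w : n → ℂ} (hw : ensemble p φ *ᵥ w = 0) (i : ι) :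
    star w ⬝ᵥ φ i = 0 := by
  have hsum : ∑ j, p j • (star (star w ⬝ᵥ φ j) * (star w ⬝ᵥ φ j)) = 0 := by
    have := congrArg (star w ⬝ᵥ ·) hw
    simp only [ensemble, sum_mulVec, smul_mulVec, vecMulVec_mulVec, dotProduct_sum,
      dotProduct_zero] at this
    rw [← this]
    refine Finset.sum_congr rfl fun j _ => ?_
    rw [op_smul_eq_smul, dotProduct_smul, dotProduct_smul, smul_eq_mul, ← star_dotProduct_star,
      star_star, mul_comm]
  have hnonneg : ∀ j ∈ Finset.univ, 0 ≤ p j • (star (star w ⬝ᵥ φ j) * (star w ⬝ᵥ φ j)) :=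
    fun j _ => smul_nonneg (hp j).le (star_mul_self_nonneg _)
  have := (Finset.sum_eq_zero_iff_of_nonneg hnonneg).mp hsum i (Finset.mem_univ i)
  simpa [(hp i).ne'] using this

variable {a b : Type*} [Fintype a] [Fintype b] {e : ι → a → ℂ} (he : ∀ i, star (e i) ⬝ᵥ e i = 1)
  (p : ι → ℝ) {ψ : ι → b → ℂ} {M : Matrix (a × b) (a × b) ℂ} {N : Matrix b b ℂ}
include he

theorem trace_ensemble_kroneckerVec_mul
    (h : ∀ i, M *ᵥ kroneckerVec (e i) (ψ i) = kroneckerVec (e i) (N *ᵥ ψ i)) :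
    (ensemble p (fun i => kroneckerVec (e i) (ψ i)) * M).trace = (ensemble p ψ * N).trace := by
  simp only [trace_ensemble_mul, h, star_kroneckerVec, kroneckerVec_dotProduct, he, one_mul]

theorem trace_ensemble_kroneckerVec_mul_sq [DecidableEq a] [DecidableEq b] (hM : M.IsHermitian)
    (hN : N.IsHermitian)
    (h : ∀ i, M *ᵥ kroneckerVec (e i) (ψ i) = kroneckerVec (e i) (N *ᵥ ψ i)) :
    (ensemble p (fun i => kroneckerVec (e i) (ψ i)) * M ^ 2).trace
      = (ensemble p ψ * N ^ 2).trace := by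
  simp only [trace_ensemble_mul]
  refine Finset.sum_congr rfl fun i _ => ?_
  rw [hM.star_dotProduct_sq_mulVec, hN.star_dotProduct_sq_mulVec, h, star_kroneckerVec,
    kroneckerVec_dotProduct, he, one_mul]

end Ensemble

section ClassicalQuantum

variable {X b : Type*} [Fintype X] [DecidableEq X] {ψ : X → b → ℂ}

theorem star_kroneckerVec_single_dotProduct [Fintype b] (hψ : ∀ x, star (ψ x) ⬝ᵥ ψ x = 1) (x y : X) :
    star (kroneckerVec (Pi.single x 1) (ψ x)) ⬝ᵥ kroneckerVec (Pi.single y 1) (ψ y)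
      = if x = y then 1 else 0 := by
  rcases eq_or_ne x y with rfl | hxy
  · simp [star_kroneckerVec, kroneckerVec_dotProduct, hψ]
  · simp [star_kroneckerVec, kroneckerVec_dotProduct, hxy]

theorem sum_single_kronecker_eq_ensemble (p : X → ℝ) (ψ : X → b → ℂ) :
    ∑ x, p x • (single x x (1 : ℂ) ⊗ₖ vecMulVec (ψ x) (star (ψ x)))
      = ensemble p (fun x => kroneckerVec (Pi.single x 1) (ψ x)) := by
  refine Finset.sum_congr rfl fun x _ => ?_
  rw [star_kroneckerVec, vecMulVec_kroneckerVec, single_eq_single_vecMulVec_single]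
  simp

theorem mlog_cq_sub_mlog_kronecker_mulVec [Fintype b] [DecidableEq b] {p : X → ℝ} (hp : ∀ x, 0 < p x)
    (hψ : ∀ x, star (ψ x) ⬝ᵥ ψ x = 1) (x : X) :
    (mlog (ensemble p fun x => kroneckerVec (Pi.single x 1) (ψ x))
        - mlog (diagonal (fun x => (p x : ℂ)) ⊗ₖ ensemble p ψ))
        *ᵥ kroneckerVec (Pi.single x 1) (ψ x)
      = kroneckerVec (Pi.single x 1) (-mlog (ensemble p ψ) *ᵥ ψ x) := by
  have hlog_cq : mlog (ensemble p fun x => kroneckerVec (Pi.single x 1) (ψ x))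
      *ᵥ kroneckerVec (Pi.single x 1) (ψ x)
      = Real.logb 2 (p x) • kroneckerVec (Pi.single x 1) (ψ x) :=
    matFun_mulVec_of_mulVec_eq_smul _ (ensemble_isHermitian _ _)
      (ensemble_mulVec_of_orthonormal p (star_kroneckerVec_single_dotProduct hψ) x)
  have hdiag : diagonal (fun x => (p x : ℂ)) *ᵥ Pi.single x 1 = p x • Pi.single x 1 := by
    ext y
    simp [Pi.single_apply]
  rw [sub_mulVec, hlog_cq, mlog_kronecker_mulVec_kroneckerVec
    (isHermitian_diagonal_of_self_adjoint _ (by ext; simp)) (ensemble_isHermitian _ _) hdiag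
    (hp x).ne' (fun w hw => star_dotProduct_eq_zero_of_ensemble_mulVec_eq_zero hp hw x)]
  ext q
  simp [kroneckerVec, neg_mulVec]

end ClassicalQuantum

theorem pure_cq_variance_eq_entropy_variance_general {X b : Type*} [Fintype X] [DecidableEq X]
    [Fintype b] [DecidableEq b]
    (p : X → ℝ) (hp : ∀ x, 0 < p x)
    (ψ : X → b → ℂ) (hψ : ∀ x, star (ψ x) ⬝ᵥ ψ x = 1)
    (ρXB : Matrix (X × b) (X × b) ℂ)
    (hρXB : ρXB = ∑ x, p x •
      (Matrix.single x x (1 : ℂ) ⊗ₖ Matrix.vecMulVec (ψ x) (star (ψ x))))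
    (ρX : Matrix X X ℂ) (hρX : ρX = Matrix.diagonal fun x => (p x : ℂ))
    (ρB : Matrix b b ℂ) (hρB : ρB = ∑ x, p x • Matrix.vecMulVec (ψ x) (star (ψ x))) :
    (ρXB * (mlog ρXB - mlog (ρX ⊗ₖ ρB) -
        relEnt ρXB (ρX ⊗ₖ ρB) • (1 : Matrix (X × b) (X × b) ℂ)) ^ 2).trace.re
      = (ρB * (-(mlog ρB) - vnEntropy ρB • (1 : Matrix b b ℂ)) ^ 2).trace.re := by
  rw [sum_single_kronecker_eq_ensemble] at hρXB
  subst hρXB hρX hρB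
  set ρXB := ensemble p fun x => kroneckerVec (Pi.single x 1) (ψ x)
  set ρB := ensemble p ψ
  set σ := diagonal (fun x => (p x : ℂ)) ⊗ₖ ρB
  have he : ∀ x : X, star (Pi.single x (1 : ℂ)) ⬝ᵥ Pi.single x 1 = 1 := by simp
  have hK := mlog_cq_sub_mlog_kronecker_mulVec hp hψ
  have hD : relEnt ρXB σ = vnEntropy ρB := by
    rw [relEnt, vnEntropy, trace_ensemble_kroneckerVec_mul he p hK, mul_neg, trace_neg,
      Complex.neg_re]
  have hL : ∀ x, (mlog ρXB - mlog σ - relEnt ρXB σ • (1 : Matrix (X × b) (X × b) ℂ))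
        *ᵥ kroneckerVec (Pi.single x 1) (ψ x)
      = kroneckerVec (Pi.single x 1) ((-mlog ρB - vnEntropy ρB • 1) *ᵥ ψ x) := by
    intro x
    rw [hD, sub_mulVec, hK, sub_mulVec, kroneckerVec_sub, smul_mulVec, smul_mulVec, one_mulVec,
      one_mulVec, kroneckerVec_smul]
  exact congrArg Complex.re <| trace_ensemble_kroneckerVec_mul_sq he p
    (((matFun_isHermitian _ _).sub (matFun_isHermitian _ _)).sub (isHermitian_one.smul (.all _)))
    ((matFun_isHermitian _ _).neg.sub (isHermitian_one.smul (.all _))) hL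

/-- For a pure-state cq ensemble, the relative entropy variance equals
the entropy variance of the average state. -/
theorem pure_cq_variance_eq_entropy_variance {X b : Type*} [Fintype X] [DecidableEq X]
    [Fintype b] [DecidableEq b]
    (p : X → ℝ) (hp : ∀ x, 0 < p x) (hp1 : ∑ x, p x = 1)
    (ψ : X → b → ℂ) (hψ : ∀ x, star (ψ x) ⬝ᵥ ψ x = 1)
    (ρXB : Matrix (X × b) (X × b) ℂ)
    (hρXB : ρXB = ∑ x, p x •
      (Matrix.single x x (1 : ℂ) ⊗ₖ Matrix.vecMulVec (ψ x) (star (ψ x))))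
    (ρX : Matrix X X ℂ) (hρX : ρX = Matrix.diagonal fun x => (p x : ℂ))
    (ρB : Matrix b b ℂ) (hρB : ρB = ∑ x, p x • Matrix.vecMulVec (ψ x) (star (ψ x))) :
    (ρXB * (mlog ρXB - mlog (ρX ⊗ₖ ρB) -
        relEnt ρXB (ρX ⊗ₖ ρB) • (1 : Matrix (X × b) (X × b) ℂ)) ^ 2).trace.re
      = (ρB * (-(mlog ρB) - vnEntropy ρB • (1 : Matrix b b ℂ)) ^ 2).trace.re :=
  pure_cq_variance_eq_entropy_variance_general p hp ψ hψ ρXB hρXB ρX hρX ρB hρB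
end

section
/- Key computation in the pure-state cq variance proof: with notation as above, log₂ρ_{XB} − log₂ρ_X⊗I_B − I_X⊗log₂ρ_B = −Σ_x |x⟩⟨x|_X ⊗ [log₂(p(x))(I_B − |ψ^x⟩⟨ψ^x|) + log₂ρ_B], and consequently Tr{ρ_{XB}[log₂ρ_{XB} − log₂ρ_X⊗I_B − I_X⊗log₂ρ_B]²} = Tr{ρ_B[log₂ρ_B]²}. -/
open Matrix Kronecker ComplexOrder

/-!
Write `E x = |x⟩⟨x|` and `P x = |ψ^x⟩⟨ψ^x|`. The matrices `E x ⊗ P x` are mutually orthogonal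
Hermitian projections and `ρ_XB = ∑ p(x) E x ⊗ P x`, so any `f` with `f 0 = 0` acts termwise:
`f(ρ_XB) = ∑ f(p(x)) E x ⊗ P x`, because on the finite spectrum, contained in `{0} ∪ range p`,
`f` agrees with an interpolating polynomial. The same holds for `ρ_X = ∑ p(x) E x`, so all three
logarithms are block diagonal in the basis of `X`, and the `x`-th block of the difference is
`-(log p(x) (1 - P x) + log ρ_B)`. In the trace against `ρ_XB` this block is squeezed between
copies of `P x`, which annihilate `1 - P x`; what survives is `∑ p(x) Tr (P x (log ρ_B)²)`,
that is `Tr (ρ_B (log ρ_B)²)`.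
-/

open Polynomial

theorem Polynomial.aeval_mul_eq_eval_smul_of_mul_eq_smul {R A : Type*} [CommSemiring R]
    [Semiring A] [Algebra R A] {a v : A} {r : R} (h : a * v = r • v) (q : R[X]) :
    aeval a q * v = q.eval r • v := by
  have hpow : ∀ n : ℕ, a ^ n * v = r ^ n • v := fun n => by
    induction n with
    | zero => simp
    | succ n ih => rw [pow_succ', mul_assoc, ih, mul_smul_comm, h, smul_smul, pow_succ]
  induction q using Polynomial.induction_on' with
  | add q₁ q₂ h₁ h₂ => simp only [map_add, add_mul, h₁, h₂, eval_add, add_smul]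
  | monomial n c =>
    rw [aeval_monomial, mul_assoc, hpow, eval_monomial, Algebra.algebraMap_eq_smul_one,
      smul_one_mul, smul_smul]

theorem spectrum.subset_setOf_isRoot_of_aeval_eq_zero {𝕜 A : Type*} [Field 𝕜] [Ring A]
    [Algebra 𝕜 A] {a : A} {q : 𝕜[X]} (h : aeval a q = 0) : spectrum 𝕜 a ⊆ {x | q.IsRoot x} := by
  intro x hx
  have hmem := spectrum.subset_polynomial_aeval a q ⟨x, hx, rfl⟩
  rw [h] at hmem
  rcases subsingleton_or_nontrivial A with _ | _
  · simp [spectrum.of_subsingleton] at hmem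
  · simpa [spectrum.zero_eq] using hmem

section OrthogonalIdempotents

variable {ι R A : Type*} [Fintype ι] [DecidableEq ι]

theorem OrthogonalIdempotents.sum_smul_mul [CommSemiring R] [Semiring A] [Algebra R A]
    {Q : ι → A} (hQ : OrthogonalIdempotents Q) (c : ι → R) (j : ι) :
    (∑ i, c i • Q i) * Q j = c j • Q j := by
  simp [Finset.sum_mul, hQ.mul_eq]

theorem OrthogonalIdempotents.aeval_sum_smul [CommSemiring R] [Semiring A] [Algebra R A]
    {Q : ι → A} (hQ : OrthogonalIdempotents Q) (c : ι → R) {q : R[X]} (hq : q.eval 0 = 0) :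
    aeval (∑ i, c i • Q i) q = ∑ i, q.eval (c i) • Q i := by
  obtain ⟨r, rfl⟩ : X ∣ q := X_dvd_iff.mpr (by rwa [coeff_zero_eq_eval_zero])
  rw [mul_comm, aeval_mul, aeval_X, Finset.mul_sum]
  refine Finset.sum_congr rfl fun i _ => ?_
  rw [mul_smul_comm, aeval_mul_eq_eval_smul_of_mul_eq_smul (hQ.sum_smul_mul c i), smul_smul,
    eval_mul, eval_X, mul_comm]

theorem OrthogonalIdempotents.cfc_sum_smul [Ring A] [StarRing A] [Algebra ℝ A] [StarModule ℝ A]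
    [TopologicalSpace A] [ContinuousFunctionalCalculus ℝ A IsSelfAdjoint]
    {Q : ι → A} (hQ : OrthogonalIdempotents Q) (hQsa : ∀ i, IsSelfAdjoint (Q i)) (c : ι → ℝ)
    {f : ℝ → ℝ} (hf : f 0 = 0) :
    cfc f (∑ i, c i • Q i) = ∑ i, f (c i) • Q i := by
  have ha : IsSelfAdjoint (∑ i, c i • Q i) :=
    isSelfAdjoint_sum _ fun i _ => (IsSelfAdjoint.all (c i)).smul (hQsa i)
  set S : Finset ℝ := insert 0 (Finset.univ.image c)
  have hspec : spectrum ℝ (∑ i, c i • Q i) ⊆ S := by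
    have hm : aeval (∑ i, c i • Q i) (X * ∏ i, (X - C (c i))) = 0 := by
      rw [hQ.aeval_sum_smul c (by simp)]
      exact Finset.sum_eq_zero fun i _ => by
        simp [eval_prod, Finset.prod_eq_zero (Finset.mem_univ i)]
    refine (spectrum.subset_setOf_isRoot_of_aeval_eq_zero hm).trans fun x hx => ?_
    simpa [S, eval_prod, Finset.prod_eq_zero_iff, sub_eq_zero, @eq_comm _ x] using hx
  set q := Lagrange.interpolate S id f
  have hq : ∀ x ∈ S, q.eval x = f x := fun x hx =>
    Lagrange.eval_interpolate_at_node f (Set.injOn_id _) hx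
  rw [cfc_congr fun x hx => (hq x (hspec hx)).symm, cfc_polynomial q _ ha,
    hQ.aeval_sum_smul c (by rw [hq 0 (Finset.mem_insert_self _ _), hf])]
  exact Finset.sum_congr rfl fun i _ => by
    rw [hq _ (Finset.mem_insert_of_mem (Finset.mem_image_of_mem c (Finset.mem_univ i)))]

end OrthogonalIdempotents

theorem matFun_eq_cfc {n : Type*} [Fintype n] [DecidableEq n] (f : ℝ → ℝ) (A : Matrix n n ℂ) :
    matFun f A = cfc f A := by
  by_cases hA : A.IsHermitian
  · rw [hA.cfc_eq, IsHermitian.cfc, Unitary.conjStarAlgAut_apply, matFun, dif_pos hA]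
    rfl
  · rw [matFun, dif_neg hA, cfc_apply_of_not_predicate A (show ¬IsSelfAdjoint A from hA)]

theorem mlog_sum_smul {ι n : Type*} [Fintype ι] [DecidableEq ι] [Fintype n] [DecidableEq n]
    {Q : ι → Matrix n n ℂ} (hQ : OrthogonalIdempotents Q) (hQh : ∀ i, (Q i).IsHermitian)
    (c : ι → ℝ) : mlog (∑ i, c i • Q i) = ∑ i, Real.logb 2 (c i) • Q i := by
  rw [mlog, matFun_eq_cfc, hQ.cfc_sum_smul hQh c Real.logb_zero]

theorem Matrix.orthogonalIdempotents_single_one {n R : Type*} [Fintype n] [DecidableEq n]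
    [Semiring R] : OrthogonalIdempotents fun i : n => single i i (1 : R) :=
  ⟨fun i => by simp [IsIdempotentElem, single_mul_single_same],
    fun _ _ hij => single_mul_single_of_ne (h := hij) ..⟩

theorem mlog_diagonal_ofReal {n : Type*} [Fintype n] [DecidableEq n] (d : n → ℝ) :
    mlog (diagonal fun i => (d i : ℂ)) = diagonal fun i => (Real.logb 2 (d i) : ℂ) := by
  have hd : (diagonal fun i => (d i : ℂ)) = ∑ i, d i • single i i (1 : ℂ) := by
    simp [← sum_single_eq_diagonal, smul_single]
  rw [hd, mlog_sum_smul orthogonalIdempotents_single_one fun i => by simp [IsHermitian]]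
  simp [← sum_single_eq_diagonal, smul_single]

theorem OrthogonalIdempotents.kronecker {ι l n R : Type*} [Fintype l] [DecidableEq l]
    [Fintype n] [DecidableEq n] [CommSemiring R] {E : ι → Matrix l l R}
    (hE : OrthogonalIdempotents E) {P : ι → Matrix n n R} (hP : ∀ i, IsIdempotentElem (P i)) :
    OrthogonalIdempotents fun i => E i ⊗ₖ P i :=
  ⟨fun i => by rw [IsIdempotentElem, ← mul_kronecker_mul, hE.idem i, hP i],
    fun i j hij => by simp only [← mul_kronecker_mul, hE.ortho hij, zero_kronecker]⟩

theorem Matrix.isIdempotentElem_vecMulVec_star {n R : Type*} [Fintype n] [CommSemiring R]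
    [StarRing R] {v : n → R} (hv : star v ⬝ᵥ v = 1) :
    IsIdempotentElem (vecMulVec v (star v)) := by
  rw [IsIdempotentElem, vecMulVec_mul_vecMulVec, hv, one_smul]

theorem IsIdempotentElem.trace_mul_sq_smul_one_sub_add {n R S : Type*} [Fintype n]
    [DecidableEq n] [CommRing R] [Monoid S] [DistribMulAction S R] [IsScalarTower S R R]
    [SMulCommClass S R R] {P : Matrix n n R} (hP : IsIdempotentElem P) (r : S)
    (L : Matrix n n R) : trace (P * (r • (1 - P) + L) ^ 2) = trace (P * L ^ 2) := by
  have hPL : P * (r • (1 - P) + L) = P * L := by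
    rw [mul_add, mul_smul_comm, hP.mul_one_sub_self, smul_zero, zero_add]
  calc trace (P * (r • (1 - P) + L) ^ 2) = trace (P * L * (r • (1 - P) + L)) := by
        rw [sq, ← mul_assoc, hPL]
    _ = trace (P * L * L) := by
      rw [mul_add, trace_add, trace_mul_cycle, smul_mul_assoc, hP.one_sub_mul_self, smul_zero,
        zero_mul, trace_zero, zero_add]
    _ = trace (P * L ^ 2) := by rw [sq, mul_assoc]

section BlockDiagonal

variable {X b R : Type*} [Fintype X] [DecidableEq X] [Fintype b] [DecidableEq b] [CommSemiring R]

variable (X b R) in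
noncomputable def blockDiagonalKroneckerHom : (X → Matrix b b R) →+* Matrix (X × b) (X × b) R :=
  (reindexRingEquiv R (Equiv.prodComm b X)).toRingHom.comp (blockDiagonalRingHom b X R)

theorem diagonal_kronecker_eq_blockDiagonalKroneckerHom (d : X → R) (B : Matrix b b R) :
    diagonal d ⊗ₖ B = blockDiagonalKroneckerHom X b R fun x => d x • B :=
  diagonal_kronecker d B

theorem one_kronecker_eq_blockDiagonalKroneckerHom (B : Matrix b b R) :
    (1 : Matrix X X R) ⊗ₖ B = blockDiagonalKroneckerHom X b R fun _ => B :=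
  one_kronecker B

theorem sum_single_kronecker_eq_blockDiagonalKroneckerHom (M : X → Matrix b b R) :
    ∑ x, single x x (1 : R) ⊗ₖ M x = blockDiagonalKroneckerHom X b R M := by
  simp_rw [← diagonal_single, diagonal_kronecker_eq_blockDiagonalKroneckerHom, ← map_sum]
  congr 1
  ext1 y
  simp [Finset.sum_apply, Pi.single_apply]

theorem trace_blockDiagonalKroneckerHom (M : X → Matrix b b R) :
    trace (blockDiagonalKroneckerHom X b R M) = ∑ x, trace (M x) := by
  rw [← trace_blockDiagonal]
  exact Fintype.sum_equiv (Equiv.prodComm X b) _ _ fun _ => rfl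

end BlockDiagonal

theorem pure_cq_log_difference_general {X b : Type*} [Fintype X] [DecidableEq X]
    [Fintype b] [DecidableEq b]
    (p : X → ℝ)
    (ψ : X → b → ℂ) (hψ : ∀ x, star (ψ x) ⬝ᵥ ψ x = 1)
    (ρXB : Matrix (X × b) (X × b) ℂ)
    (hρXB : ρXB = ∑ x, p x •
      (Matrix.single x x (1 : ℂ) ⊗ₖ Matrix.vecMulVec (ψ x) (star (ψ x))))
    (ρX : Matrix X X ℂ) (hρX : ρX = Matrix.diagonal fun x => (p x : ℂ))
    (ρB : Matrix b b ℂ) (hρB : ρB = ∑ x, p x • Matrix.vecMulVec (ψ x) (star (ψ x))) :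
    mlog ρXB - (mlog ρX) ⊗ₖ (1 : Matrix b b ℂ) - (1 : Matrix X X ℂ) ⊗ₖ (mlog ρB)
      = -∑ x, Matrix.single x x (1 : ℂ) ⊗ₖ
          (Real.logb 2 (p x) •
            ((1 : Matrix b b ℂ) - Matrix.vecMulVec (ψ x) (star (ψ x))) + mlog ρB) ∧
    (ρXB * (mlog ρXB - (mlog ρX) ⊗ₖ (1 : Matrix b b ℂ) -
        (1 : Matrix X X ℂ) ⊗ₖ (mlog ρB)) ^ 2).trace
      = (ρB * (mlog ρB) ^ 2).trace := by
  set P : X → Matrix b b ℂ := fun x => vecMulVec (ψ x) (star (ψ x))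
  set L := mlog ρB
  set φ := blockDiagonalKroneckerHom X b ℂ
  have hP : ∀ x, IsIdempotentElem (P x) := fun x => isIdempotentElem_vecMulVec_star (hψ x)
  have hblock : ∀ c : X → ℝ, ∑ x, c x • (single x x 1 ⊗ₖ P x) = φ fun x => c x • P x :=
    fun c => by
      simp_rw [← kronecker_smul]
      exact sum_single_kronecker_eq_blockDiagonalKroneckerHom _
  have hρXB' : ρXB = φ fun x => p x • P x := by rw [hρXB, hblock]
  have hlogXB : mlog ρXB = φ fun x => Real.logb 2 (p x) • P x := by
    rw [hρXB, mlog_sum_smul (orthogonalIdempotents_single_one.kronecker hP) fun x => ?_, hblock]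
    simp [IsHermitian, conjTranspose_kronecker, P]
  have hdiff : mlog ρXB - (mlog ρX) ⊗ₖ (1 : Matrix b b ℂ) - (1 : Matrix X X ℂ) ⊗ₖ L
      = -φ fun x => Real.logb 2 (p x) • (1 - P x) + L := by
    rw [hlogXB, hρX, mlog_diagonal_ofReal, diagonal_kronecker_eq_blockDiagonalKroneckerHom,
      one_kronecker_eq_blockDiagonalKroneckerHom, ← map_sub, ← map_sub, ← map_neg]
    congr 1
    funext x
    rw [Pi.sub_apply, Pi.sub_apply, Pi.neg_apply, Complex.coe_smul]
    module
  refine ⟨by rw [hdiff, sum_single_kronecker_eq_blockDiagonalKroneckerHom], ?_⟩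
  rw [hdiff, hρXB', neg_sq, ← map_pow,
    ← map_mul, trace_blockDiagonalKroneckerHom, show ρB = ∑ x, p x • P x from hρB, Finset.sum_mul,
    trace_sum]
  refine Finset.sum_congr rfl fun x _ => ?_
  simp only [Pi.mul_apply, Pi.pow_apply, smul_mul_assoc, trace_smul,
    (hP x).trace_mul_sq_smul_one_sub_add]

/-- Key computation in the pure-state cq variance proof. -/
theorem pure_cq_log_difference {X b : Type*} [Fintype X] [DecidableEq X]
    [Fintype b] [DecidableEq b]
    (p : X → ℝ) (hp : ∀ x, 0 < p x) (hp1 : ∑ x, p x = 1)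
    (ψ : X → b → ℂ) (hψ : ∀ x, star (ψ x) ⬝ᵥ ψ x = 1)
    (ρXB : Matrix (X × b) (X × b) ℂ)
    (hρXB : ρXB = ∑ x, p x •
      (Matrix.single x x (1 : ℂ) ⊗ₖ Matrix.vecMulVec (ψ x) (star (ψ x))))
    (ρX : Matrix X X ℂ) (hρX : ρX = Matrix.diagonal fun x => (p x : ℂ))
    (ρB : Matrix b b ℂ) (hρB : ρB = ∑ x, p x • Matrix.vecMulVec (ψ x) (star (ψ x))) :
    mlog ρXB - (mlog ρX) ⊗ₖ (1 : Matrix b b ℂ) - (1 : Matrix X X ℂ) ⊗ₖ (mlog ρB)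
      = -∑ x, Matrix.single x x (1 : ℂ) ⊗ₖ
          (Real.logb 2 (p x) •
            ((1 : Matrix b b ℂ) - Matrix.vecMulVec (ψ x) (star (ψ x))) + mlog ρB) ∧
    (ρXB * (mlog ρXB - (mlog ρX) ⊗ₖ (1 : Matrix b b ℂ) -
        (1 : Matrix X X ℂ) ⊗ₖ (mlog ρB)) ^ 2).trace
      = (ρB * (mlog ρB) ^ 2).trace :=
  pure_cq_log_difference_general p ψ hψ ρXB hρXB ρX hρX ρB hρB
end
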